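/- Let G be a connected graph. If for every nonempty proper subset S of V(G) the component graph β(G,S) belongs to G^cs, then G itself belongs to G^cs. -/

import Mathlib

open SimpleGraph
open scoped Classical

variable {V : Type*} [Fintype V]

noncomputable def setWeight (w : V → ℝ) (A : Set V) : ℝ :=
  ∑ v : V, if v ∈ A then w v else 0

def IsComponentOf (G : SimpleGraph V) (S C : Set V) : Prop :=
  ∃ c : (G.induce S).ConnectedComponent,
    C = Subtype.val '' {x : ↥S | (G.induce S).connectedComponentMk x = c}

def Touches (G : SimpleGraph V) (C D : Set V) : Prop :=
  ∃ a ∈ C, ∃ b ∈ D, G.Adj a b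

def IsSafeSet (G : SimpleGraph V) (w : V → ℝ) (S : Set V) : Prop :=
  S.Nonempty ∧ S ≠ Set.univ ∧
    ∀ C D : Set V, IsComponentOf G S C → IsComponentOf G Sᶜ D → Touches G C D →
      setWeight w D ≤ setWeight w C

def IsConnSafeSet (G : SimpleGraph V) (w : V → ℝ) (S : Set V) : Prop :=
  IsSafeSet G w S ∧ (G.induce S).Connected

noncomputable def safeNumber (G : SimpleGraph V) (w : V → ℝ) : ℝ :=
  sInf (setWeight w '' {S | IsSafeSet G w S})

noncomputable def connSafeNumber (G : SimpleGraph V) (w : V → ℝ) : ℝ :=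
  sInf (setWeight w '' {S | IsConnSafeSet G w S})

def InGcs (G : SimpleGraph V) : Prop :=
  ∀ w : V → ℝ, (∀ v, 0 < w v) → safeNumber G w = connSafeNumber G w

def betaVerts (G : SimpleGraph V) (S : Set V) : Set (Set V) :=
  {C | IsComponentOf G S C ∨ IsComponentOf G Sᶜ C}

def betaGraph (G : SimpleGraph V) (S : Set V) : SimpleGraph ↥(betaVerts G S) where
  Adj C D := C ≠ D ∧ Touches G C.1 D.1
  symm := by
    refine ⟨?_⟩
    rintro C D ⟨hne, a, ha, b, hb, hab⟩
    exact ⟨hne.symm, b, hb, a, ha, hab.symm⟩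
  loopless := by refine ⟨?_⟩; rintro C ⟨hne, _⟩; exact hne rfl


/-!
Let `S` be a safe set of `G`. Weight each vertex of `β(G,S)` by the weight of the component it
stands for. The components of `G[S]` then form a safe set of `β(G,S)` of weight `w(S)`, since
`β(G,S)` is bipartite and its edges are exactly the touching pairs of components. As
`β(G,S) ∈ G^cs`, it has a connected safe set `𝒯` of weight at most `w(S)`.

The map sending a vertex to its component contracts `G` onto `β(G,S)` with connected fibres.
Reachability inside the preimage of a vertex set of `β(G,S)` is therefore reachability inside
that set, so the preimage `T` of `𝒯` is connected, the components of `G - T` are the preimages of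
the components of `β(G,S) - 𝒯`, and `T` is a connected safe set of `G` with `w(T) ≤ w(S)`.
-/

section Components

variable {W : Type*} (G : SimpleGraph W)

def componentSet (S : Set W) (v : W) : Set W :=
  {u | ∃ (hv : v ∈ S) (hu : u ∈ S), (G.induce S).Reachable ⟨v, hv⟩ ⟨u, hu⟩}

variable {G} {S C D : Set W} {u v : W}

lemma componentSet_subset : componentSet G S v ⊆ S :=
  fun _ ⟨_, hu, _⟩ => hu

lemma mem_componentSet_self (hv : v ∈ S) : v ∈ componentSet G S v :=
  ⟨hv, hv, .refl _⟩

lemma componentSet_eq_of_mem (hu : u ∈ componentSet G S v) :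
    componentSet G S u = componentSet G S v := by
  obtain ⟨hv, hu, hvu⟩ := hu
  ext x
  constructor
  · rintro ⟨_, hx, hux⟩
    exact ⟨hv, hx, hvu.trans hux⟩
  · rintro ⟨_, hx, hvx⟩
    exact ⟨hu, hx, hvu.symm.trans hvx⟩

lemma componentSet_eq_of_adj (hu : u ∈ S) (hv : v ∈ S) (huv : G.Adj u v) :
    componentSet G S u = componentSet G S v :=
  (componentSet_eq_of_mem ⟨hu, hv, Adj.reachable (G := G.induce S) huv⟩).symm

lemma componentSet_preconnected : (G.induce (componentSet G S v)).Preconnected := by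
  suffices h : ∀ (hv : v ∈ S) (u : ↥S), (G.induce S).Reachable ⟨v, hv⟩ u →
      ∃ hu : u.1 ∈ componentSet G S v, (G.induce (componentSet G S v)).Reachable
        ⟨v, mem_componentSet_self hv⟩ ⟨u, hu⟩ by
    rintro ⟨x, hv, hx, hvx⟩ ⟨y, _, hy, hvy⟩
    exact (h hv ⟨x, hx⟩ hvx).2.symm.trans (h hv ⟨y, hy⟩ hvy).2
  intro hv u hvu
  rw [reachable_iff_reflTransGen] at hvu
  induction hvu with
  | refl => exact ⟨mem_componentSet_self hv, .refl _⟩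
  | @tail x y hvx hxy ih =>
    obtain ⟨hx, hvx'⟩ := ih
    have hy : y.1 ∈ componentSet G S v :=
      ⟨hv, y.2, ((reachable_iff_reflTransGen _ _).mpr hvx).trans hxy.reachable⟩
    exact ⟨hy, hvx'.trans (Adj.reachable (G := G.induce (componentSet G S v)) hxy)⟩

lemma componentSet_eq_singleton_of_isIndepSet (hS : G.IsIndepSet S) (hv : v ∈ S) :
    componentSet G S v = {v} := by
  have hbot : G.induce S = ⊥ := by
    ext x y
    exact iff_of_false (fun hxy => hS x.2 y.2 (Subtype.coe_ne_coe.mpr hxy.ne) hxy) id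
  ext u
  simp only [componentSet, hbot, reachable_bot, Set.mem_ofPred_eq, Set.mem_singleton_iff]
  constructor
  · rintro ⟨_, _, h⟩
    exact congrArg Subtype.val h.symm
  · rintro rfl
    exact ⟨hv, hv, rfl⟩

lemma isComponentOf_iff : IsComponentOf G S C ↔ ∃ v ∈ S, C = componentSet G S v := by
  have key : ∀ x : ↥S, Subtype.val '' {y | (G.induce S).connectedComponentMk y =
      (G.induce S).connectedComponentMk x} = componentSet G S x := fun x => by
    ext u
    simp only [componentSet, Set.mem_image, Set.mem_ofPred_eq, ConnectedComponent.eq]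
    constructor
    · rintro ⟨y, hyx, rfl⟩
      exact ⟨x.2, y.2, hyx.symm⟩
    · rintro ⟨_, hu, hxu⟩
      exact ⟨⟨u, hu⟩, hxu.symm, rfl⟩
  constructor
  · rintro ⟨c, rfl⟩
    obtain ⟨x, rfl⟩ := c.exists_rep
    exact ⟨x, x.2, key x⟩
  · rintro ⟨v, hv, rfl⟩
    exact ⟨_, (key ⟨v, hv⟩).symm⟩

lemma isComponentOf_componentSet (hv : v ∈ S) : IsComponentOf G S (componentSet G S v) :=
  isComponentOf_iff.mpr ⟨v, hv, rfl⟩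

lemma IsComponentOf.nonempty (h : IsComponentOf G S C) : C.Nonempty := by
  obtain ⟨v, hv, rfl⟩ := isComponentOf_iff.mp h
  exact ⟨v, mem_componentSet_self hv⟩

lemma IsComponentOf.subset (h : IsComponentOf G S C) : C ⊆ S := by
  obtain ⟨v, -, rfl⟩ := isComponentOf_iff.mp h
  exact componentSet_subset

lemma IsComponentOf.eq_componentSet (h : IsComponentOf G S C) (hv : v ∈ C) :
    C = componentSet G S v := by
  obtain ⟨u, -, rfl⟩ := isComponentOf_iff.mp h
  exact (componentSet_eq_of_mem hv).symm

lemma IsComponentOf.eq_of_touches (hC : IsComponentOf G S C) (hD : IsComponentOf G S D)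
    (h : Touches G C D) : C = D := by
  obtain ⟨a, ha, b, hb, hab⟩ := h
  rw [hC.eq_componentSet ha, hD.eq_componentSet hb]
  exact componentSet_eq_of_adj (hC.subset ha) (hD.subset hb) hab

end Components

section SafeSets

variable {W : Type*} [Fintype W] {w : W → ℝ}

lemma setWeight_singleton (w : W → ℝ) (a : W) : setWeight w {a} = w a := by
  simp [setWeight]

lemma setWeight_pos (hw : ∀ v, 0 < w v) {A : Set W} (hA : A.Nonempty) :
    0 < setWeight w A := by
  obtain ⟨a, ha⟩ := hA
  refine Finset.sum_pos' (fun v _ => ?_) ⟨a, Finset.mem_univ a, by simp [ha, hw a]⟩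
  split_ifs
  exacts [(hw v).le, le_rfl]

lemma isSafeSet_of_isIndepSet {H : SimpleGraph W} {S : Set W} (hS : H.IsIndepSet S)
    (hSc : H.IsIndepSet Sᶜ) (hne : S.Nonempty) (hnu : S ≠ Set.univ)
    (hw : ∀ a ∈ S, ∀ b ∉ S, H.Adj a b → w b ≤ w a) : IsSafeSet H w S := by
  refine ⟨hne, hnu, fun C D hC hD ⟨a, ha, b, hb, hab⟩ => ?_⟩
  have haS := hC.subset ha
  have hbS := hD.subset hb
  rw [hC.eq_componentSet ha, componentSet_eq_singleton_of_isIndepSet hS haS,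
    hD.eq_componentSet hb, componentSet_eq_singleton_of_isIndepSet hSc hbS,
    setWeight_singleton, setWeight_singleton]
  exact hw a haS b hbS hab

lemma csInf_image_eq_csInf_image_iff {α : Type*} [Finite α] {f : α → ℝ} {s t : Set α}
    (hst : s ⊆ t) (hf : ∀ x ∈ t, 0 < f x) :
    sInf (f '' t) = sInf (f '' s) ↔ ∀ x ∈ t, ∃ y ∈ s, f y ≤ f x := by
  constructor
  · intro heq x hx
    obtain ⟨x₀, hx₀, hx₀min⟩ := ((Set.nonempty_of_mem hx).image f).csInf_mem (Set.toFinite _)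
    have hs : (f '' s).Nonempty := by
      by_contra hempty
      rw [Set.not_nonempty_iff_eq_empty.mp hempty, Real.sInf_empty, ← hx₀min] at heq
      exact (hf x₀ hx₀).ne' heq
    obtain ⟨y, hy, hymin⟩ := hs.csInf_mem (Set.toFinite _)
    refine ⟨y, hy, ?_⟩
    rw [hymin, ← heq]
    exact csInf_le (Set.toFinite _).bddBelow (Set.mem_image_of_mem f hx)
  · intro h
    rcases t.eq_empty_or_nonempty with rfl | ⟨x, hx⟩
    · rw [Set.subset_empty_iff.mp hst]
    obtain ⟨x₀, hx₀, hx₀min⟩ := (Set.nonempty_of_mem hx |>.image f).csInf_mem (Set.toFinite _)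
    obtain ⟨y, hy, hyx₀⟩ := h x₀ hx₀
    refine le_antisymm (csInf_le_csInf (Set.toFinite _).bddBelow ⟨f y, y, hy, rfl⟩
      (Set.image_mono hst)) ?_
    rw [← hx₀min]
    exact (csInf_le (Set.toFinite _).bddBelow (Set.mem_image_of_mem f hy)).trans hyx₀

lemma inGcs_iff {H : SimpleGraph W} : InGcs H ↔ ∀ w : W → ℝ, (∀ v, 0 < w v) →
    ∀ S, IsSafeSet H w S → ∃ T, IsConnSafeSet H w T ∧ setWeight w T ≤ setWeight w S :=
  forall₂_congr fun _ hw =>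
    csInf_image_eq_csInf_image_iff (fun _ hT => hT.1) fun _ hS => setWeight_pos hw hS.1

end SafeSets

section Contraction

variable {W P : Type*}

structure IsContraction (G : SimpleGraph W) (H : SimpleGraph P) (π : W → P) : Prop where
  surjective : Function.Surjective π
  adj_of_adj : ∀ ⦃x y⦄, G.Adj x y → π x ≠ π y → H.Adj (π x) (π y)
  exists_adj_of_adj : ∀ ⦃p q⦄, H.Adj p q → ∃ x y, π x = p ∧ π y = q ∧ G.Adj x y
  preconnected_fiber : ∀ p, (G.induce (π ⁻¹' {p})).Preconnected

namespace IsContraction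

variable {G : SimpleGraph W} {H : SimpleGraph P} {π : W → P}

lemma reachable_of_eq (hπ : IsContraction G H π) {𝒜 : Set P} {x y : ↥(π ⁻¹' 𝒜)}
    (hxy : π x = π y) : (G.induce (π ⁻¹' 𝒜)).Reachable x y := by
  have hsub : π ⁻¹' {π x} ⊆ π ⁻¹' 𝒜 := Set.preimage_mono (Set.singleton_subset_iff.mpr x.2)
  exact (hπ.preconnected_fiber (π x) ⟨x, rfl⟩ ⟨y, hxy.symm⟩).map (induceHomOfLE G hsub).toHom

lemma reachable_of_reachable_image (hπ : IsContraction G H π) {𝒜 : Set P}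
    {x y : ↥(π ⁻¹' 𝒜)} (h : (H.induce 𝒜).Reachable ⟨π x, x.2⟩ ⟨π y, y.2⟩) :
    (G.induce (π ⁻¹' 𝒜)).Reachable x y := by
  have hs := Function.surjInv_eq hπ.surjective
  let lift (p : ↥𝒜) : ↥(π ⁻¹' 𝒜) :=
    ⟨Function.surjInv hπ.surjective p, by rw [Set.mem_preimage, hs]; exact p.2⟩
  have lift_adj : ∀ p q : ↥𝒜, (H.induce 𝒜).Adj p q →
      (G.induce (π ⁻¹' 𝒜)).Reachable (lift p) (lift q) := by
    intro p q hpq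
    obtain ⟨a, b, hap, hbq, hab⟩ := hπ.exists_adj_of_adj hpq
    have hap : π a = p := hap
    have hbq : π b = q := hbq
    have ha : a ∈ π ⁻¹' 𝒜 := by rw [Set.mem_preimage, hap]; exact p.2
    have hb : b ∈ π ⁻¹' 𝒜 := by rw [Set.mem_preimage, hbq]; exact q.2
    exact (hπ.reachable_of_eq (y := ⟨a, ha⟩) ((hs p).trans hap.symm)).trans <|
      (Adj.reachable (G := G.induce (π ⁻¹' 𝒜)) (u := ⟨a, ha⟩) (v := ⟨b, hb⟩) hab).trans <|
      hπ.reachable_of_eq (hbq.trans (hs q).symm)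
  rw [reachable_iff_reflTransGen] at h
  have hlift := Relation.ReflTransGen.lift' lift
    (fun p q hpq => (reachable_iff_reflTransGen _ _).mp (lift_adj p q hpq)) _ _ h
  exact (hπ.reachable_of_eq (y := lift ⟨π x, x.2⟩) (hs _).symm).trans <|
    ((reachable_iff_reflTransGen _ _).mpr hlift).trans (hπ.reachable_of_eq (hs _))

lemma reachable_image_of_reachable (hπ : IsContraction G H π) {𝒜 : Set P}
    {x y : ↥(π ⁻¹' 𝒜)} (h : (G.induce (π ⁻¹' 𝒜)).Reachable x y) :
    (H.induce 𝒜).Reachable ⟨π x, x.2⟩ ⟨π y, y.2⟩ := by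
  rw [reachable_iff_reflTransGen] at h ⊢
  refine Relation.ReflTransGen.lift' (fun z : ↥(π ⁻¹' 𝒜) => (⟨π z, z.2⟩ : ↥𝒜))
    (fun a b hab => ?_) _ _ h
  by_cases he : π a = π b
  · change Relation.ReflTransGen (H.induce 𝒜).Adj ⟨π a, a.2⟩ ⟨π b, b.2⟩
    rw [show (⟨π a, a.2⟩ : ↥𝒜) = ⟨π b, b.2⟩ from Subtype.ext he]
  · exact .single (hπ.adj_of_adj hab he)

theorem reachable_induce_preimage_iff (hπ : IsContraction G H π) {𝒜 : Set P}
    (x y : ↥(π ⁻¹' 𝒜)) :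
    (G.induce (π ⁻¹' 𝒜)).Reachable x y ↔ (H.induce 𝒜).Reachable ⟨π x, x.2⟩ ⟨π y, y.2⟩ :=
  ⟨hπ.reachable_image_of_reachable, hπ.reachable_of_reachable_image⟩

lemma componentSet_preimage (hπ : IsContraction G H π) {𝒜 : Set P} {x : W} :
    componentSet G (π ⁻¹' 𝒜) x = π ⁻¹' componentSet H 𝒜 (π x) := by
  ext u
  exact exists_congr fun hx => exists_congr fun hu =>
    hπ.reachable_induce_preimage_iff ⟨x, hx⟩ ⟨u, hu⟩

lemma isComponentOf_preimage (hπ : IsContraction G H π) {𝒜 : Set P} {D : Set W}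
    (hD : IsComponentOf G (π ⁻¹' 𝒜) D) : ∃ 𝒟, IsComponentOf H 𝒜 𝒟 ∧ D = π ⁻¹' 𝒟 := by
  obtain ⟨x, hx, rfl⟩ := isComponentOf_iff.mp hD
  exact ⟨_, isComponentOf_componentSet hx, hπ.componentSet_preimage⟩

lemma connected_preimage (hπ : IsContraction G H π) {𝒜 : Set P}
    (h : (H.induce 𝒜).Connected) : (G.induce (π ⁻¹' 𝒜)).Connected := by
  obtain ⟨p⟩ := h.nonempty
  obtain ⟨x, hx⟩ := hπ.surjective p
  have hx𝒜 : x ∈ π ⁻¹' 𝒜 := by rw [Set.mem_preimage, hx]; exact p.2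
  exact (connected_iff _).mpr
    ⟨fun _ _ => hπ.reachable_of_reachable_image (h.preconnected _ _), ⟨⟨x, hx𝒜⟩⟩⟩

lemma touches_of_touches_preimage (hπ : IsContraction G H π) {𝒞 𝒟 : Set P}
    (hdisj : Disjoint 𝒞 𝒟) (h : Touches G (π ⁻¹' 𝒞) (π ⁻¹' 𝒟)) : Touches H 𝒞 𝒟 := by
  obtain ⟨a, ha, b, hb, hab⟩ := h
  exact ⟨π a, ha, π b, hb, hπ.adj_of_adj hab (hdisj.ne_of_mem ha hb)⟩

end IsContraction

variable [Fintype W]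

noncomputable def fiberWeight (π : W → P) (w : W → ℝ) (p : P) : ℝ :=
  setWeight w (π ⁻¹' {p})

lemma fiberWeight_pos {π : W → P} (hπ : Function.Surjective π) {w : W → ℝ}
    (hw : ∀ v, 0 < w v) (p : P) : 0 < fiberWeight π w p :=
  setWeight_pos hw ((Set.singleton_nonempty p).preimage hπ)

variable [Fintype P]

lemma setWeight_fiberWeight (π : W → P) (w : W → ℝ) (𝒜 : Set P) :
    setWeight (fiberWeight π w) 𝒜 = setWeight w (π ⁻¹' 𝒜) := by
  simp only [setWeight, fiberWeight, Set.mem_preimage, Set.mem_singleton_iff]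
  rw [← Finset.sum_fiberwise Finset.univ π]
  refine Finset.sum_congr rfl fun p _ => ?_
  rw [Finset.sum_filter]
  by_cases hp : p ∈ 𝒜 <;> simp +contextual [hp]

namespace IsContraction

variable {G : SimpleGraph W} {H : SimpleGraph P} {π : W → P} {w : W → ℝ} {𝒯 : Set P}

lemma isSafeSet_preimage (hπ : IsContraction G H π) (h : IsSafeSet H (fiberWeight π w) 𝒯) :
    IsSafeSet G w (π ⁻¹' 𝒯) := by
  obtain ⟨hne, hnu, hsafe⟩ := h
  refine ⟨hne.preimage hπ.surjective, fun he => hnu (hπ.surjective.preimage_injective he),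
    fun C D hC hD hCD => ?_⟩
  obtain ⟨𝒞, h𝒞, rfl⟩ := hπ.isComponentOf_preimage hC
  obtain ⟨𝒟, h𝒟, rfl⟩ := hπ.isComponentOf_preimage (𝒜 := 𝒯ᶜ) hD
  rw [← setWeight_fiberWeight, ← setWeight_fiberWeight]
  exact hsafe _ _ h𝒞 h𝒟 (hπ.touches_of_touches_preimage
    (Disjoint.mono h𝒞.subset h𝒟.subset disjoint_compl_right) hCD)

lemma isConnSafeSet_preimage (hπ : IsContraction G H π)
    (h : IsConnSafeSet H (fiberWeight π w) 𝒯) : IsConnSafeSet G w (π ⁻¹' 𝒯) :=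
  ⟨hπ.isSafeSet_preimage h.1, hπ.connected_preimage h.2⟩

end IsContraction

end Contraction

section Beta

variable {W : Type*} (G : SimpleGraph W) (S : Set W)

noncomputable def betaProj (v : W) : ↥(betaVerts G S) :=
  if hv : v ∈ S then ⟨componentSet G S v, Or.inl (isComponentOf_componentSet hv)⟩
  else ⟨componentSet G Sᶜ v, Or.inr (isComponentOf_componentSet hv)⟩

def betaSide : Set ↥(betaVerts G S) :=
  {C | IsComponentOf G S C.1}

variable {G S}

lemma mem_betaProj (v : W) : v ∈ (betaProj G S v).1 := by
  unfold betaProj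
  split_ifs with hv
  exacts [mem_componentSet_self hv, mem_componentSet_self (Set.mem_compl hv)]

lemma betaProj_eq_of_mem {C : ↥(betaVerts G S)} {v : W} (hv : v ∈ C.1) : betaProj G S v = C := by
  obtain ⟨C, hC | hC⟩ := C
  · have hvS : v ∈ S := hC.subset hv
    simp only [betaProj, dif_pos hvS, hC.eq_componentSet hv]
  · have hvS : v ∉ S := hC.subset hv
    simp only [betaProj, dif_neg hvS, hC.eq_componentSet hv]

lemma betaProj_eq_iff {C : ↥(betaVerts G S)} {v : W} : betaProj G S v = C ↔ v ∈ C.1 :=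
  ⟨fun h => h ▸ mem_betaProj v, betaProj_eq_of_mem⟩

lemma preimage_betaProj_singleton (C : ↥(betaVerts G S)) : betaProj G S ⁻¹' {C} = C.1 :=
  Set.ext fun _ => betaProj_eq_iff

lemma preimage_betaProj_betaSide : betaProj G S ⁻¹' betaSide G S = S := by
  ext v
  refine ⟨fun hv => hv.subset (mem_betaProj v), fun hv => ?_⟩
  simp only [Set.mem_preimage, betaSide, Set.mem_ofPred_eq, betaProj, dif_pos hv]
  exact isComponentOf_componentSet hv

variable (G S) in
lemma isContraction_betaProj : IsContraction G (betaGraph G S) (betaProj G S) where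
  surjective C := by
    obtain ⟨v, hv⟩ : C.1.Nonempty := C.2.elim IsComponentOf.nonempty IsComponentOf.nonempty
    exact ⟨v, betaProj_eq_of_mem hv⟩
  adj_of_adj x y hxy hne := ⟨hne, x, mem_betaProj x, y, mem_betaProj y, hxy⟩
  exists_adj_of_adj := by
    rintro C D ⟨-, a, ha, b, hb, hab⟩
    exact ⟨a, b, betaProj_eq_of_mem ha, betaProj_eq_of_mem hb, hab⟩
  preconnected_fiber := by
    rintro ⟨C, hC⟩
    rw [preimage_betaProj_singleton]
    rcases hC with hC | hC <;> obtain ⟨v, -, rfl⟩ := isComponentOf_iff.mp hC <;>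
      exact componentSet_preconnected

lemma isSafeSet_betaSide [Fintype W] {w : W → ℝ} (hS : IsSafeSet G w S) :
    IsSafeSet (betaGraph G S) (fun C => setWeight w C.1) (betaSide G S) := by
  obtain ⟨⟨v, hv⟩, hnu, hsafe⟩ := hS
  refine isSafeSet_of_isIndepSet ?_ ?_ ⟨betaProj G S v, ?_⟩ ?_ ?_
  · exact fun C hC D hD hne hadj => hne (Subtype.ext (hC.eq_of_touches hD hadj.2))
  · exact fun C hC D hD hne hadj => hne (Subtype.ext
      ((C.2.resolve_left hC).eq_of_touches (D.2.resolve_left hD) hadj.2))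
  · rwa [← Set.mem_preimage, preimage_betaProj_betaSide]
  · exact fun h => hnu (by rw [← preimage_betaProj_betaSide (G := G) (S := S), h, Set.preimage_univ])
  · exact fun C hC D hD hadj => hsafe _ _ hC (D.2.resolve_left hD) hadj.2

end Beta

theorem stmt_2_general (G : SimpleGraph V)
    (h : ∀ S : Set V, S.Nonempty → S ≠ Set.univ → InGcs (betaGraph G S)) :
    InGcs G := by
  rw [inGcs_iff]
  intro w hw S hS
  have hπ := isContraction_betaProj G S
  have hW : fiberWeight (betaProj G S) w = fun C => setWeight w C.1 :=
    funext fun C => congrArg (setWeight w) (preimage_betaProj_singleton C)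
  obtain ⟨𝒯, h𝒯, hle⟩ := inGcs_iff.mp (h S hS.1 hS.2.1) _ (fiberWeight_pos hπ.surjective hw)
    _ (hW ▸ isSafeSet_betaSide hS)
  refine ⟨_, hπ.isConnSafeSet_preimage h𝒯, ?_⟩
  rwa [setWeight_fiberWeight, setWeight_fiberWeight, preimage_betaProj_betaSide] at hle

theorem stmt_2 (G : SimpleGraph V) (hG : G.Connected)
    (h : ∀ S : Set V, S.Nonempty → S ≠ Set.univ → InGcs (betaGraph G S)) :
    InGcs G :=
  stmt_2_general G h
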